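/- The function x ↦ f₀(x) + x²/2 is convex on ℝ, where f₀ is the regularized double-well potential; equivalently, f₀''(x) ≥ −1 for all x. -/

import Mathlib

/-! Outside `[-K, K]` the potential is the second-order Taylor polynomial of `(c² - 1)² / 4`
at `±K`. Hence `f0 K` is `C²`, with second derivative `3c² - 1` on `[-K, K]` and `3K² - 1`
outside, both at least `-1`. -/

/-- The regularized Landau–Lifshitz double-well potential with cutoff parameter `K`. -/
noncomputable def f0 (K c : ℝ) : ℝ :=
  if K < c then (3*K^2 - 1)/2 * c^2 - 2*K^3*c + (3*K^4 + 1)/4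
  else if c < -K then (3*K^2 - 1)/2 * c^2 + 2*K^3*c + (3*K^4 + 1)/4
  else ((c^2 - 1)^2)/4

open Set Filter

theorem HasDerivAt.of_eqOn_Iic_of_eqOn_Ici {f f' g g' h h' : ℝ → ℝ} {a : ℝ}
    (hfg : EqOn f g (Iic a)) (hfg' : EqOn f' g' (Iic a))
    (hfh : EqOn f h (Ici a)) (hfh' : EqOn f' h' (Ici a))
    (hg : ∀ x, HasDerivAt g (g' x) x) (hh : ∀ x, HasDerivAt h (h' x) x) (x : ℝ) :
    HasDerivAt f (f' x) x := by
  rcases lt_trichotomy x a with hx | rfl | hx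
  · rw [hfg' hx.le]
    exact (hg x).congr_of_eventuallyEq <|
      eventually_of_mem (Iio_mem_nhds hx) fun y hy ↦ hfg (Iio_subset_Iic_self hy)
  · have hle : HasDerivWithinAt f (f' x) (Iic x) x :=
      hfg' self_mem_Iic ▸ (hg x).hasDerivWithinAt.congr_of_mem (fun y hy ↦ hfg hy) self_mem_Iic
    have hge : HasDerivWithinAt f (f' x) (Ici x) x :=
      hfh' self_mem_Ici ▸ (hh x).hasDerivWithinAt.congr_of_mem (fun y hy ↦ hfh hy) self_mem_Ici
    simpa only [Iic_union_Ici, hasDerivWithinAt_univ] using hle.union hge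
  · rw [hfh' hx.le]
    exact (hh x).congr_of_eventuallyEq <|
      eventually_of_mem (Ioi_mem_nhds hx) fun y hy ↦ hfh (Ioi_subset_Ici_self hy)

theorem hasDerivAt_ite_ite {a b : ℝ} (hab : a ≤ b) {l l' m m' r r' : ℝ → ℝ}
    (hl : ∀ x, HasDerivAt l (l' x) x) (hm : ∀ x, HasDerivAt m (m' x) x)
    (hr : ∀ x, HasDerivAt r (r' x) x) (hlm : l a = m a) (hlm' : l' a = m' a)
    (hrm : r b = m b) (hrm' : r' b = m' b) (x : ℝ) :
    HasDerivAt (fun x ↦ if b < x then r x else if x < a then l x else m x)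
      (if b < x then r' x else if x < a then l' x else m' x) x := by
  have lt_Iic {u v : ℝ → ℝ} (huv : u a = v a) :
      EqOn (fun x ↦ if x < a then u x else v x) u (Iic a) := fun y hy ↦ by
    rcases (mem_Iic.1 hy).lt_or_eq with hy | rfl <;> simp [*]
  have lt_Ici {u v : ℝ → ℝ} : EqOn (fun x ↦ if x < a then u x else v x) v (Ici a) :=
    fun y hy ↦ by simp [not_lt.2 (mem_Ici.1 hy)]
  have gt_Iic {u v : ℝ → ℝ} : EqOn (fun x ↦ if b < x then u x else v x) v (Iic b) :=
    fun y hy ↦ by simp [not_lt.2 (mem_Iic.1 hy)]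
  have gt_Ici {u v : ℝ → ℝ} (huv : u b = v b) :
      EqOn (fun x ↦ if b < x then u x else v x) u (Ici b) := fun y hy ↦ by
    rcases (mem_Ici.1 hy).lt_or_eq with hy | rfl <;> simp [*]
  have hrb : r b = if b < a then l b else m b := by simp [not_lt.2 hab, hrm]
  have hrb' : r' b = if b < a then l' b else m' b := by simp [not_lt.2 hab, hrm']
  exact .of_eqOn_Iic_of_eqOn_Ici gt_Iic gt_Iic (gt_Ici hrb) (gt_Ici hrb')
    (.of_eqOn_Iic_of_eqOn_Ici (lt_Iic hlm) (lt_Iic hlm') lt_Ici lt_Ici hl hm) hr x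

theorem convexOn_univ_of_hasDerivAt2_nonneg {f f' f'' : ℝ → ℝ}
    (hf : ∀ x, HasDerivAt f (f' x) x) (hf' : ∀ x, HasDerivAt f' (f'' x) x)
    (hf'' : ∀ x, 0 ≤ f'' x) : ConvexOn ℝ univ f :=
  convexOn_of_hasDerivWithinAt2_nonneg convex_univ
    (continuous_iff_continuousAt.2 fun x ↦ (hf x).continuousAt).continuousOn
    (fun x _ ↦ (hf x).hasDerivWithinAt) (fun x _ ↦ (hf' x).hasDerivWithinAt) fun x _ ↦ hf'' x

noncomputable def f0Deriv (K c : ℝ) : ℝ :=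
  if K < c then (3*K^2 - 1)*c - 2*K^3
  else if c < -K then (3*K^2 - 1)*c + 2*K^3
  else c^3 - c

noncomputable def f0Deriv2 (K c : ℝ) : ℝ :=
  if K < c then 3*K^2 - 1
  else if c < -K then 3*K^2 - 1
  else 3*c^2 - 1

theorem hasDerivAt_f0 {K : ℝ} (hK : 0 ≤ K) (x : ℝ) : HasDerivAt (f0 K) (f0Deriv K x) x := by
  unfold f0 f0Deriv
  apply hasDerivAt_ite_ite (neg_le_self hK)
  · intro y
    refine ((((hasDerivAt_pow 2 y).const_mul ((3*K^2 - 1)/2)).add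
      ((hasDerivAt_id y).const_mul (2*K^3))).add_const ((3*K^4 + 1)/4)).congr_deriv ?_
    push_cast; ring
  · intro y
    refine ((((hasDerivAt_pow 2 y).sub_const 1).pow 2).div_const 4).congr_deriv ?_
    push_cast; ring
  · intro y
    refine ((((hasDerivAt_pow 2 y).const_mul ((3*K^2 - 1)/2)).sub
      ((hasDerivAt_id y).const_mul (2*K^3))).add_const ((3*K^4 + 1)/4)).congr_deriv ?_
    push_cast; ring
  all_goals ring

theorem hasDerivAt_f0Deriv {K : ℝ} (hK : 0 ≤ K) (x : ℝ) :
    HasDerivAt (f0Deriv K) (f0Deriv2 K x) x := by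
  unfold f0Deriv f0Deriv2
  apply hasDerivAt_ite_ite (neg_le_self hK)
  · intro y
    simpa using ((hasDerivAt_id y).const_mul (3*K^2 - 1)).add_const (2*K^3)
  · intro y
    refine ((hasDerivAt_pow 3 y).sub (hasDerivAt_id y)).congr_deriv ?_
    push_cast; ring
  · intro y
    simpa using ((hasDerivAt_id y).const_mul (3*K^2 - 1)).sub_const (2*K^3)
  all_goals ring

theorem neg_one_le_f0Deriv2 (K c : ℝ) : -1 ≤ f0Deriv2 K c := by
  unfold f0Deriv2
  split_ifs <;> nlinarith [sq_nonneg K, sq_nonneg c]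

/-- The function `x ↦ f0 K x + x²/2` is convex on ℝ; equivalently, the second derivative
of `f0 K` is bounded below by `−1`. -/
theorem f0_add_sq_convex (K : ℝ) (hK : 1 ≤ K) :
    ConvexOn ℝ Set.univ (fun x : ℝ => f0 K x + x^2/2) ∧
    (∀ x : ℝ, -1 ≤ deriv (deriv (f0 K)) x) := by
  have hK₀ : 0 ≤ K := zero_le_one.trans hK
  have hf := hasDerivAt_f0 hK₀
  have hf' := hasDerivAt_f0Deriv hK₀
  refine ⟨convexOn_univ_of_hasDerivAt2_nonneg (f' := fun x ↦ f0Deriv K x + x)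
    (fun x ↦ ((hf x).add ((hasDerivAt_pow 2 x).div_const 2)).congr_deriv (by push_cast; ring))
    (fun x ↦ (hf' x).add (hasDerivAt_id x))
    (fun x ↦ by linarith [neg_one_le_f0Deriv2 K x]), fun x ↦ ?_⟩
  rw [funext fun y ↦ (hf y).deriv, (hf' x).deriv]
  exact neg_one_le_f0Deriv2 K x
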